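/- arXiv:1510.03822 — 4 statements merged into one kernel-verified Lean document; each statement's English description precedes it below -/
import Mathlib

section
/- The function S ↦ |R_G(S) ∪ N_out(R_G(S))| is submodular: for M ⊆ N ⊆ V and v ∉ N, |C_G(M ∪ {v})| − |C_G(M)| ≥ |C_G(N ∪ {v})| − |C_G(N)|, where C_G(S) = R_G(S) ∪ N_out(R_G(S)). -/
/-! The covered set distributes over unions, so the gain from adding `v` to `S` is
`|C_G({v}) \ C_G(S)|`, which can only shrink as `S` grows. -/

open scoped Classical

/-- The set of vertices of a finite directed graph `E` reachable by a directed
path from some vertex of `S`. -/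
noncomputable def reachSet {V : Type*} [Fintype V] (E : V → V → Prop) (S : Finset V) : Finset V :=
  Finset.univ.filter (fun u => ∃ s ∈ S, Relation.ReflTransGen E s u)

/-- The set of out-neighbors of vertices of `A`. -/
noncomputable def noutSet {V : Type*} [Fintype V] (E : V → V → Prop) (A : Finset V) : Finset V :=
  Finset.univ.filter (fun w => ∃ a ∈ A, E a w)

/-- The covered set: reachable vertices together with their out-neighbors. -/
noncomputable def covSet {V : Type*} [Fintype V] (E : V → V → Prop) (S : Finset V) : Finset V :=
  reachSet E S ∪ noutSet E (reachSet E S)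

open Finset

section
variable {V : Type*} [Fintype V] (E : V → V → Prop) (A B : Finset V)

theorem reachSet_union : reachSet E (A ∪ B) = reachSet E A ∪ reachSet E B := by
  ext u
  simp only [reachSet, mem_filter, mem_union, mem_univ, true_and, or_and_right, exists_or]

theorem noutSet_union : noutSet E (A ∪ B) = noutSet E A ∪ noutSet E B := by
  ext u
  simp only [noutSet, mem_filter, mem_union, mem_univ, true_and, or_and_right, exists_or]

theorem covSet_union : covSet E (A ∪ B) = covSet E A ∪ covSet E B := by
  simp only [covSet, reachSet_union, noutSet_union]
  ac_rfl

theorem covSet_mono {A B : Finset V} (h : A ⊆ B) : covSet E A ⊆ covSet E B := by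
  rw [← union_eq_right.mpr h, covSet_union]
  exact subset_union_left

theorem card_covSet_union :
    (covSet E (A ∪ B)).card = (covSet E B \ covSet E A).card + (covSet E A).card := by
  rw [card_sdiff_add_card, covSet_union, union_comm]

end

theorem cov_card_submodular_general {V : Type*} [Fintype V] (E : V → V → Prop)
    (M N : Finset V) (v : V) (hMN : M ⊆ N) :
    ((covSet E (N ∪ {v})).card : ℝ) - (covSet E N).card ≤
      ((covSet E (M ∪ {v})).card : ℝ) - (covSet E M).card := by
  have gain : ∀ A : Finset V, ((covSet E (A ∪ {v})).card : ℝ) - (covSet E A).card =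
      (covSet E {v} \ covSet E A).card := fun A => by
    rw [card_covSet_union]
    push_cast
    ring
  rw [gain, gain]
  exact_mod_cast card_le_card (sdiff_subset_sdiff subset_rfl (covSet_mono E hMN))

theorem cov_card_submodular {V : Type*} [Fintype V] (E : V → V → Prop)
    (M N : Finset V) (v : V) (hMN : M ⊆ N) (hv : v ∉ N) :
    ((covSet E (N ∪ {v})).card : ℝ) - (covSet E N).card ≤
      ((covSet E (M ∪ {v})).card : ℝ) - (covSet E M).card :=
  cov_card_submodular_general E M N v hMN
end

section
/- For a monotone submodular function f with f(∅) = 0, the greedy algorithm that iteratively adds the element with maximum marginal gain produces, after k steps, a set S_k with f(S_k) ≥ (1 − (1 − 1/k)^k)·max_{|T|=k} f(T) ≥ (1 − 1/e)·max_{|T|=k} f(T). -/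
/-!
By submodularity, the value of any set `T` of size `k` exceeds `f (S i)` by at most the sum of the
marginal gains of the elements of `T` at `S i`, hence by at most `k` times the greedy gain. So each
greedy step closes at least a `1/k` fraction of the gap `f T - f (S i)`, and after `k` steps the gap
is at most `(1 - 1/k)^k f T ≤ f T / e`.
-/

open Finset

section Submodular

variable {V : Type*} [DecidableEq V] {f : Finset V → ℝ}

def IsSubmodular (f : Finset V → ℝ) : Prop :=
  ∀ M N : Finset V, ∀ v : V, M ⊆ N → v ∉ N → f (N ∪ {v}) - f N ≤ f (M ∪ {v}) - f M

theorem le_add_sum_marginal_gains (hsub : IsSubmodular f)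
    (A : Finset V) {B : Finset V} (hAB : Disjoint A B) :
    f (A ∪ B) ≤ f A + ∑ v ∈ B, (f (A ∪ {v}) - f A) := by
  induction B using Finset.induction_on with
  | empty => simp
  | @insert v B hvB ih =>
    rw [disjoint_insert_right] at hAB
    have hvAB : v ∉ A ∪ B := by simp [hAB.1, hvB]
    have gain_le := hsub A (A ∪ B) v subset_union_left hvAB
    rw [union_insert, ← union_singleton, sum_insert hvB]
    linarith [ih hAB.2]

theorem le_add_card_mul_greedy_gain (hmono : Monotone f) (hsub : IsSubmodular f)
    {A : Finset V} {v : V} (hv : ∀ w ∉ A, f (A ∪ {w}) - f A ≤ f (A ∪ {v}) - f A)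
    (T : Finset V) :
    f T ≤ f A + #T * (f (A ∪ {v}) - f A) := by
  have gain_nonneg : 0 ≤ f (A ∪ {v}) - f A := sub_nonneg.2 (hmono subset_union_left)
  calc f T ≤ f (A ∪ (T \ A)) := hmono (by simp)
    _ ≤ f A + ∑ w ∈ T \ A, (f (A ∪ {w}) - f A) :=
        le_add_sum_marginal_gains hsub A disjoint_sdiff
    _ ≤ f A + #(T \ A) * (f (A ∪ {v}) - f A) := by
        grw [sum_le_card_nsmul _ _ _ fun w hw ↦ hv w (mem_sdiff.1 hw).2, nsmul_eq_mul]
    _ ≤ f A + #T * (f (A ∪ {v}) - f A) := by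
        gcongr; exact sdiff_subset

theorem greedy_gap_le (hmono : Monotone f) (hsub : IsSubmodular f)
    {A : Finset V} {v : V} (hv : ∀ w ∉ A, f (A ∪ {w}) - f A ≤ f (A ∪ {v}) - f A)
    (T : Finset V) :
    f T - f (A ∪ {v}) ≤ (1 - 1 / #T) * (f T - f A) := by
  have gain_nonneg : 0 ≤ f (A ∪ {v}) - f A := sub_nonneg.2 (hmono subset_union_left)
  have gap_le : (f T - f A) / #T ≤ f (A ∪ {v}) - f A :=
    div_le_of_le_mul₀ (Nat.cast_nonneg _) gain_nonneg
      (by linarith [le_add_card_mul_greedy_gain hmono hsub hv T])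
  rw [sub_mul, one_mul, one_div_mul_eq_div]
  linarith

end Submodular

open scoped Classical

theorem greedy_approximation_general {V : Type*} [Fintype V] (k : ℕ) (hk : 0 < k)
    (f : Finset V → ℝ)
    (hmono : ∀ M N : Finset V, M ⊆ N → f M ≤ f N)
    (hsub : ∀ M N : Finset V, ∀ v : V, M ⊆ N → v ∉ N →
      f (N ∪ {v}) - f N ≤ f (M ∪ {v}) - f M)
    (hempty : f ∅ = 0)
    (S : ℕ → Finset V) (hS0 : S 0 = ∅)
    (hgreedy : ∀ i < k, ∃ v ∉ S i,
      S (i + 1) = S i ∪ {v} ∧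
        ∀ w ∉ S i, f (S i ∪ {w}) - f (S i) ≤ f (S i ∪ {v}) - f (S i)) :
    ∀ T : Finset V, T.card = k →
      (1 - (1 : ℝ) / Real.exp 1) * f T ≤ (1 - (1 - 1 / (k : ℝ)) ^ k) * f T ∧
        (1 - (1 - 1 / (k : ℝ)) ^ k) * f T ≤ f (S k) := by
  intro T hT
  have hk' : (1 : ℝ) ≤ k := by exact_mod_cast hk
  have ratio_nonneg : 0 ≤ 1 - 1 / (k : ℝ) := sub_nonneg.2 (div_le_one_of_le₀ hk' k.cast_nonneg)
  have gap : f T - f (S k) ≤ (1 - 1 / (k : ℝ)) ^ k * (f T - f (S 0)) :=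
    le_geom (u := fun i ↦ f T - f (S i)) ratio_nonneg k fun i hi ↦ by
      obtain ⟨v, -, hSv, hv⟩ := hgreedy i hi
      simpa only [hSv, ← hT] using greedy_gap_le (fun M N ↦ hmono M N) hsub hv T
  have ratio_pow_le : (1 - 1 / (k : ℝ)) ^ k ≤ 1 / Real.exp 1 := by
    simpa [Real.exp_neg] using Real.one_sub_div_pow_le_exp_neg (n := k) (t := 1) hk'
  have hfT : 0 ≤ f T := hempty ▸ hmono ∅ T (empty_subset T)
  rw [hS0, hempty, sub_zero] at gap
  exact ⟨by gcongr, by linarith⟩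

theorem greedy_approximation {V : Type*} [Fintype V] (k : ℕ) (hk : 0 < k)
    (hcard : k ≤ Fintype.card V)
    (f : Finset V → ℝ)
    (hmono : ∀ M N : Finset V, M ⊆ N → f M ≤ f N)
    (hsub : ∀ M N : Finset V, ∀ v : V, M ⊆ N → v ∉ N →
      f (N ∪ {v}) - f N ≤ f (M ∪ {v}) - f M)
    (hempty : f ∅ = 0)
    (S : ℕ → Finset V) (hS0 : S 0 = ∅)
    (hgreedy : ∀ i < k, ∃ v ∉ S i,
      S (i + 1) = S i ∪ {v} ∧
        ∀ w ∉ S i, f (S i ∪ {w}) - f (S i) ≤ f (S i ∪ {v}) - f (S i)) :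
    ∀ T : Finset V, T.card = k →
      (1 - (1 : ℝ) / Real.exp 1) * f T ≤ (1 - (1 - 1 / (k : ℝ)) ^ k) * f T ∧
        (1 - (1 - 1 / (k : ℝ)) ^ k) * f T ≤ f (S k) :=
  greedy_approximation_general k hk f hmono hsub hempty S hS0 hgreedy
end

section
/- Key lemma for the greedy approximation guarantee: if f is monotone and submodular, then for any sets S and T, f(T) ≤ f(S) + Σ_{v ∈ T \ S} (f(S ∪ {v}) − f(S)). In particular, if |T| = k, some element v ∈ T \ S has marginal gain at least (f(T) − f(S))/k. -/
/-!
Add the elements of `T \ S` to `S` one at a time. By submodularity each step gains at most what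
the element would gain when added to `S` alone, so telescoping bounds `f (S ∪ T)`, and hence
`f T` by monotonicity. For the second claim, the largest single gain is at least the average of
the `|T \ S| ≤ k` gains, and it is nonnegative by monotonicity.
-/

open scoped Classical

open Finset

theorem Finset.exists_div_le_of_le_sum {ι : Type*} {s : Finset ι} {g : ι → ℝ} {a : ℝ} {k : ℕ}
    (hs : s.Nonempty) (hg : ∀ i ∈ s, 0 ≤ g i) (hk : #s ≤ k) (ha : a ≤ ∑ i ∈ s, g i) :
    ∃ i ∈ s, a / k ≤ g i := by
  obtain ⟨i, hi, hmax⟩ := s.exists_max_image g hs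
  refine ⟨i, hi, ?_⟩
  have hk_pos : (0 : ℝ) < k := by exact_mod_cast hs.card_pos.trans_le hk
  rw [div_le_iff₀ hk_pos]
  calc a ≤ ∑ j ∈ s, g j := ha
    _ ≤ #s • g i := sum_le_card_nsmul s g (g i) hmax
    _ = #s * g i := nsmul_eq_mul _ _
    _ ≤ k * g i := mul_le_mul_of_nonneg_right (by exact_mod_cast hk) (hg i hi)
    _ = g i * k := mul_comm _ _

section Submodular

variable {V : Type*} [DecidableEq V] (f : Finset V → ℝ)

def marginalGain (S : Finset V) (v : V) : ℝ := f (S ∪ {v}) - f S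

variable {f}

theorem marginalGain_nonneg (hmono : ∀ M N : Finset V, M ⊆ N → f M ≤ f N) (S : Finset V)
    (v : V) : 0 ≤ marginalGain f S v :=
  sub_nonneg.2 (hmono _ _ subset_union_left)

theorem le_add_sum_marginalGain_of_disjoint
    (hsub : ∀ M N : Finset V, ∀ v : V, M ⊆ N → v ∉ N →
      f (N ∪ {v}) - f N ≤ f (M ∪ {v}) - f M)
    (D : Finset V) :
    ∀ S : Finset V, Disjoint S D → f (S ∪ D) ≤ f S + ∑ v ∈ D, marginalGain f S v := by
  induction D using Finset.induction with
  | empty => simp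
  | insert a D haD ih =>
    intro S hdisj
    have haS : a ∉ S := disjoint_right.1 hdisj (mem_insert_self a D)
    have hdisj' : Disjoint (S ∪ {a}) D := by
      rw [disjoint_union_left, disjoint_singleton_left]
      exact ⟨hdisj.mono_right (subset_insert a D), haD⟩
    have hgain : ∀ v ∈ D, marginalGain f (S ∪ {a}) v ≤ marginalGain f S v := fun v hv =>
      hsub S (S ∪ {a}) v subset_union_left <| by
        simp [disjoint_right.1 hdisj (mem_insert_of_mem hv), ne_of_mem_of_not_mem hv haD]
    have hset : S ∪ insert a D = S ∪ {a} ∪ D := by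
      rw [insert_eq, union_assoc]
    calc f (S ∪ insert a D) = f (S ∪ {a} ∪ D) := by rw [hset]
      _ ≤ f (S ∪ {a}) + ∑ v ∈ D, marginalGain f (S ∪ {a}) v := ih _ hdisj'
      _ ≤ f (S ∪ {a}) + ∑ v ∈ D, marginalGain f S v := by gcongr with v hv; exact hgain v hv
      _ = f S + ∑ v ∈ insert a D, marginalGain f S v := by
        rw [sum_insert haD, marginalGain]; ring

theorem le_add_sum_marginalGain (hmono : ∀ M N : Finset V, M ⊆ N → f M ≤ f N)
    (hsub : ∀ M N : Finset V, ∀ v : V, M ⊆ N → v ∉ N →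
      f (N ∪ {v}) - f N ≤ f (M ∪ {v}) - f M)
    (S T : Finset V) : f T ≤ f S + ∑ v ∈ T \ S, marginalGain f S v :=
  calc f T ≤ f (S ∪ T \ S) := hmono _ _ (by rw [union_sdiff_self_eq_union]; exact subset_union_right)
    _ ≤ f S + ∑ v ∈ T \ S, marginalGain f S v :=
      le_add_sum_marginalGain_of_disjoint hsub _ _ disjoint_sdiff

end Submodular

theorem submodular_key_lemma_general {V : Type*} (f : Finset V → ℝ)
    (hmono : ∀ M N : Finset V, M ⊆ N → f M ≤ f N)
    (hsub : ∀ M N : Finset V, ∀ v : V, M ⊆ N → v ∉ N →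
      f (N ∪ {v}) - f N ≤ f (M ∪ {v}) - f M) :
    ∀ S T : Finset V,
      (f T ≤ f S + ∑ v ∈ T \ S, (f (S ∪ {v}) - f S)) ∧
        (∀ k : ℕ, T.card = k → (T \ S).Nonempty →
          ∃ v ∈ T \ S, (f T - f S) / (k : ℝ) ≤ f (S ∪ {v}) - f S) := by
  intro S T
  have hkey := le_add_sum_marginalGain hmono hsub S T
  refine ⟨hkey, fun k hk hne => ?_⟩
  exact exists_div_le_of_le_sum hne (fun v _ => marginalGain_nonneg hmono S v)
    (hk ▸ card_le_card sdiff_subset) (sub_le_iff_le_add'.2 hkey)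

theorem submodular_key_lemma {V : Type*} [Fintype V] (f : Finset V → ℝ)
    (hmono : ∀ M N : Finset V, M ⊆ N → f M ≤ f N)
    (hsub : ∀ M N : Finset V, ∀ v : V, M ⊆ N → v ∉ N →
      f (N ∪ {v}) - f N ≤ f (M ∪ {v}) - f M) :
    ∀ S T : Finset V,
      (f T ≤ f S + ∑ v ∈ T \ S, (f (S ∪ {v}) - f S)) ∧
        (∀ k : ℕ, T.card = k → (T \ S).Nonempty →
          ∃ v ∈ T \ S, (f T - f S) / (k : ℝ) ≤ f (S ∪ {v}) - f S) :=
  submodular_key_lemma_general f hmono hsub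
end

section
/- For the deterministic coverage function F(S) = |S ∪ N_out(S)| on a bipartite graph built from a set-cover instance (left vertices = subsets S_1,…,S_m, right vertices = elements u_1,…,u_n, edge (i,j) iff u_j ∈ S_i), a set N of k left vertices satisfies F(N) = n + k if and only if the corresponding k subsets cover the ground set U. -/
open scoped Classical

/-- The directed bipartite set-cover graph: an edge from subset-vertex `i`
to element-vertex `u` iff `u ∈ Sets i`. -/
def setCoverEdge {ι U : Type*} (Sets : ι → Finset U) : (ι ⊕ U) → (ι ⊕ U) → Prop
  | Sum.inl i, Sum.inr u => u ∈ Sets i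
  | _, _ => False

theorem setCover_coverage_iff {ι U : Type*} [Fintype ι] [Fintype U]
    (Sets : ι → Finset U) (k : ℕ) (N : Finset ι) (hN : N.card = k) :
    ((N.image Sum.inl ∪ noutSet (setCoverEdge Sets) (N.image Sum.inl)).card
        = Fintype.card U + k)
      ↔ (∀ u : U, ∃ i ∈ N, u ∈ Sets i) := by
  classical
  set C : Finset U := Finset.univ.filter (fun u => ∃ i ∈ N, u ∈ Sets i) with hC
  have hnout : noutSet (setCoverEdge Sets) (N.image Sum.inl) = C.image Sum.inr := by
    ext w
    simp only [noutSet, Finset.mem_filter, Finset.mem_univ, true_and, Finset.mem_image, hC]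
    constructor
    · rintro ⟨a, ha, hE⟩
      obtain ⟨i, hi, rfl⟩ := ha
      cases w with
      | inl j => exact absurd hE (by simp [setCoverEdge])
      | inr u => exact ⟨u, by simpa using ⟨i, hi, hE⟩, rfl⟩
    · rintro ⟨u, hu, rfl⟩
      obtain ⟨i, hi, hui⟩ := hu
      exact ⟨Sum.inl i, ⟨i, hi, rfl⟩, hui⟩
  rw [hnout]
  have hdisj : Disjoint (N.image Sum.inl) (C.image Sum.inr) := by
    simp only [Finset.disjoint_left, Finset.mem_image]
    rintro w ⟨i, _, rfl⟩ ⟨u, _, h⟩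
    exact Sum.inl_ne_inr h.symm
  rw [Finset.card_union_of_disjoint hdisj,
    Finset.card_image_of_injective _ Sum.inl_injective,
    Finset.card_image_of_injective _ Sum.inr_injective, hN]
  rw [Nat.add_comm (Fintype.card U) k, Nat.add_left_cancel_iff]
  constructor
  · intro h u
    have hCu : C = Finset.univ := Finset.eq_univ_of_card _ (by simpa using h)
    have hu : u ∈ C := hCu ▸ Finset.mem_univ u
    simpa [hC] using hu
  · intro h
    have : C = Finset.univ := by
      apply Finset.eq_univ_of_forall
      intro u; simp [hC, h u]
    simp [this]
end
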